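/- arXiv:2107.04349 — 2 statements merged into one kernel-verified Lean document; each statement's English description precedes it below -/
import Mathlib

section
/- For every x ∈ ℝⁿ, the biconjugate of f(x) = G(card(x)) + ‖x‖² satisfies f**(x) = sup { 2⟨x̃, z̃⟩ − Σ_{i=1}^n max(z̃_i² − g_i, 0) : z̃ ∈ ℝⁿ with z̃_1 ≥ z̃_2 ≥ ⋯ ≥ z̃_n ≥ 0 }, where x̃ denotes the sorted magnitudes of x and a summand with g_i = +∞ is interpreted as 0. -/
/-!
Write `y ∈ ℝⁿ` as `|y i| = 2 z (π i)` with `z` nonincreasing. Then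
`f*(y) = ∑ᵢ max (zᵢ² - gᵢ, 0)`, summands with `gᵢ = ∞` read as `0`. A vector `x` supported on
`S` gains `⟪x, y⟫ - ‖x‖² ≤ ∑_{i ∈ S} yᵢ²/4`, at most the sum of the `|S|` largest `zⱼ²`,
while paying `G(|S|)`; conversely `y/2` restricted to the coordinates where `zⱼ² > gⱼ` gains
exactly the claimed value, since for nondecreasing `g` the sum of any `k` of the `gⱼ` is at least
`G(k)`. Finally `⟪x, y⟫ ≤ 2 ∑ⱼ x̃ⱼ zⱼ` by the rearrangement inequality, with equality when the
signs and the order of `y` are matched to those of `x`.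
-/

open scoped RealInnerProductSpace ENNReal
noncomputable section

/-- `ℝⁿ` with the Euclidean inner product and norm. -/
abbrev Evec (n : ℕ) := EuclideanSpace ℝ (Fin n)

/-- The number of nonzero entries of a vector. -/
def spcard {n : ℕ} (x : Evec n) : ℕ := (Finset.univ.filter (fun i => x i ≠ 0)).card

/-- The absolute values of the entries of `x` sorted in nonincreasing order,
as a `1`-based function on `ℕ` (with value `0` outside `{1,…,n}`, so the
convention `x̃_{n+1} = 0` is built in). -/
def sortedAbs {n : ℕ} (x : Evec n) : ℕ → ℝ :=
  fun j => if h : 1 ≤ j ∧ j ≤ n then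
    |x ((Tuple.sort (fun i : Fin n => -|x i|)) ⟨j - 1, by omega⟩)| else 0

/-- `G(k) = ∑_{i=1}^k g_i`. -/
def Gsum (g : ℕ → ℝ≥0∞) (k : ℕ) : ℝ≥0∞ := ∑ i ∈ Finset.Icc 1 k, g i

/-- `f(x) = G(card x) + ‖x‖²`, valued in `EReal`. -/
def fobj {n : ℕ} (g : ℕ → ℝ≥0∞) (x : Evec n) : EReal :=
  ((Gsum g (spcard x) : ℝ≥0∞) : EReal) + ((‖x‖ ^ 2 : ℝ) : EReal)

/-- The convex conjugate `f*` of `f`. -/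
def fconj {n : ℕ} (g : ℕ → ℝ≥0∞) (y : Evec n) : EReal :=
  ⨆ x : Evec n, ((⟪x, y⟫ : ℝ) : EReal) - fobj g x

/-- The biconjugate (convex envelope) `f**` of `f`. -/
def fbiconj {n : ℕ} (g : ℕ → ℝ≥0∞) (x : Evec n) : EReal :=
  ⨆ y : Evec n, ((⟪x, y⟫ : ℝ) : EReal) - fconj g y

/-- `v` is a subgradient of `f**` at `x`. -/
def IsSubgrad {n : ℕ} (g : ℕ → ℝ≥0∞) (v x : Evec n) : Prop :=
  ∀ w : Evec n, fbiconj g x + ((⟪v, w - x⟫ : ℝ) : EReal) ≤ fbiconj g w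

/-- `z = (I − AᵀA)x + Aᵀb`. -/
def zvec {n m : ℕ} (A : Evec n →L[ℝ] Evec m) (b : Evec m) (x : Evec n) : Evec n :=
  x - ContinuousLinearMap.adjoint A (A x) + ContinuousLinearMap.adjoint A b

/-- `x` is a stationary point of the relaxation `R_g(·) + ‖A·−b‖²`:
`2z` is a subgradient of `f**` at `x`, where `z = (I − AᵀA)x + Aᵀb`. -/
def IsStationaryPt {n m : ℕ} (g : ℕ → ℝ≥0∞) (A : Evec n →L[ℝ] Evec m) (b : Evec m)
    (x : Evec n) : Prop :=
  IsSubgrad g ((2 : ℝ) • zvec A b x) x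

/-- `A` satisfies the RIP of order `r` with constant `δ`. -/
def RIP {n m : ℕ} (A : Evec n →L[ℝ] Evec m) (r : ℕ) (δ : ℝ) : Prop :=
  ∀ w : Evec n, spcard w ≤ r →
    (1 - δ) * ‖w‖ ^ 2 ≤ ‖A w‖ ^ 2 ∧ ‖A w‖ ^ 2 ≤ (1 + δ) * ‖w‖ ^ 2

/-- Square root on `[0,∞]`, with `√(+∞) = +∞`. -/
def sqrtE (a : ℝ≥0∞) : ℝ≥0∞ := a ^ (1 / 2 : ℝ)

/-- The relaxed objective `R_g(x) + ‖Ax − b‖²`, where `R_g(x) = f**(x) − ‖x‖²`. -/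
def relaxObj {n m : ℕ} (g : ℕ → ℝ≥0∞) (A : Evec n →L[ℝ] Evec m) (b : Evec m)
    (x : Evec n) : EReal :=
  (fbiconj g x - ((‖x‖ ^ 2 : ℝ) : EReal)) + ((‖A x - b‖ ^ 2 : ℝ) : EReal)

/-- The original (unrelaxed) objective `G(card(x)) + ‖Ax − b‖²`. -/
def origObj {n m : ℕ} (g : ℕ → ℝ≥0∞) (A : Evec n →L[ℝ] Evec m) (b : Evec m)
    (x : Evec n) : EReal :=
  ((Gsum g (spcard x) : ℝ≥0∞) : EReal) + ((‖A x - b‖ ^ 2 : ℝ) : EReal)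

/-- `x` is a local minimizer of `F`. -/
def IsLocalMinimizer {n : ℕ} (F : Evec n → EReal) (x : Evec n) : Prop :=
  ∃ U ∈ nhds x, ∀ w ∈ U, F x ≤ F w

open Finset

section

variable {n : ℕ}

theorem Fin.sum_filter_val_lt_card_le_sum {M : Type*} [AddCommMonoid M] [PartialOrder M]
    [IsOrderedAddMonoid M] {h : Fin n → M} (hh : Monotone h) (T : Finset (Fin n)) :
    ∑ j : Fin n with j.val < #T, h j ≤ ∑ j ∈ T, h j := by
  induction T using Finset.induction_on_max with
  | empty => simp
  | insert a s has ih =>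
    have ha : a ∉ s := fun ha => lt_irrefl a (has a ha)
    have hsa : #s ≤ a := by
      simpa using card_le_card (fun j hj => mem_Iio.2 (has j hj) : s ⊆ Iio a)
    have hfilter : (univ.filter fun j : Fin n => j.val < #s + 1)
        = insert ⟨#s, by omega⟩ (univ.filter fun j : Fin n => j.val < #s) := by
      ext j; simp [Fin.ext_iff]; omega
    rw [card_insert_of_notMem ha, sum_insert ha, hfilter, sum_insert (by simp)]
    exact add_le_add (hh (Fin.le_def.2 hsa)) ih

theorem Fin.sum_le_sum_filter_val_lt_card {M : Type*} [AddCommMonoid M] [PartialOrder M]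
    [IsOrderedAddMonoid M] {h : Fin n → M} (hh : Antitone h) (T : Finset (Fin n)) :
    ∑ j ∈ T, h j ≤ ∑ j : Fin n with j.val < #T, h j :=
  Fin.sum_filter_val_lt_card_le_sum (M := Mᵒᵈ) hh.dual_right T

theorem Gsum_eq_sum_filter_val_lt (g : ℕ → ℝ≥0∞) {k : ℕ} (hk : k ≤ n) :
    Gsum g k = ∑ j : Fin n with j.val < k, g ((j : ℕ) + 1) := by
  have hrange : (range n).filter (· < k) = range k := by
    ext i; simp only [mem_filter, mem_range]; omega
  rw [sum_filter, Fin.sum_univ_eq_sum_range (fun j => if j < k then g (j + 1) else 0),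
    ← sum_filter, hrange, range_eq_Ico, sum_Ico_add']
  rfl

theorem Gsum_le_sum_of_le_card {g : ℕ → ℝ≥0∞} (hg : Monotone g) {k : ℕ} {T : Finset (Fin n)}
    (hk : k ≤ #T) : Gsum g k ≤ ∑ j ∈ T, g ((j : ℕ) + 1) :=
  calc Gsum g k ≤ Gsum g #T := sum_le_sum_of_subset (Icc_subset_Icc_right hk)
    _ = ∑ j : Fin n with j.val < #T, g ((j : ℕ) + 1) :=
        Gsum_eq_sum_filter_val_lt g (card_le_univ T |>.trans_eq (Fintype.card_fin n))
    _ ≤ ∑ j ∈ T, g ((j : ℕ) + 1) :=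
        Fin.sum_filter_val_lt_card_le_sum (fun i j hij => hg (by simpa using hij)) T

theorem antitone_abs_comp_sort (v : Fin n → ℝ) :
    Antitone fun j => |v (Tuple.sort (fun i => -|v i|) j)| := fun i j hij => by
  simpa using Tuple.monotone_sort (fun i => -|v i|) hij

theorem sortedAbs_succ (x : Evec n) (j : Fin n) :
    sortedAbs x ((j : ℕ) + 1) = |x (Tuple.sort (fun i => -|x i|) j)| := by
  rw [sortedAbs, dif_pos ⟨by omega, j.isLt⟩]
  rfl

theorem inner_le_sum_sortedAbs_mul (x : Evec n) {y : Evec n} {w : Fin n → ℝ} (hw : Antitone w)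
    {π : Equiv.Perm (Fin n)} (hy : ∀ i, |y i| = w (π i)) :
    ⟪x, y⟫ ≤ ∑ j : Fin n, sortedAbs x ((j : ℕ) + 1) * w j := by
  set σ := Tuple.sort fun i => -|x i|
  calc ⟪x, y⟫ ≤ ∑ i, |x i| * w (π i) := by
        simp only [PiLp.inner_apply, RCLike.inner_apply, conj_trivial, ← hy, ← abs_mul]
        exact sum_le_sum fun i _ => by rw [mul_comm]; exact le_abs_self _
    _ = ∑ j, |x (σ j)| • w ((σ.trans π) j) := (Equiv.sum_comp σ _).symm
    _ ≤ ∑ j, |x (σ j)| • w j :=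
        ((antitone_abs_comp_sort x).monovary hw).sum_smul_comp_perm_le_sum_smul
    _ = ∑ j : Fin n, sortedAbs x ((j : ℕ) + 1) * w j := by simp [sortedAbs_succ, σ]

theorem exists_inner_eq_sum_sortedAbs_mul (x : Evec n) {w : Fin n → ℝ} (hw : ∀ j, 0 ≤ w j) :
    ∃ (y : Evec n) (π : Equiv.Perm (Fin n)),
      (∀ i, |y i| = w (π i)) ∧ ⟪x, y⟫ = ∑ j : Fin n, sortedAbs x ((j : ℕ) + 1) * w j := by
  set σ := Tuple.sort fun i => -|x i|
  refine ⟨WithLp.toLp 2 fun i => if 0 ≤ x i then w (σ.symm i) else -w (σ.symm i), σ.symm,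
    fun i => ?_, ?_⟩
  · dsimp only
    split_ifs <;> simp [abs_of_nonneg (hw _)]
  · calc ⟪x, _⟫ = ∑ i, |x i| * w (σ.symm i) := by
          simp only [PiLp.inner_apply, RCLike.inner_apply, conj_trivial]
          refine sum_congr rfl fun i _ => ?_
          split_ifs with hx
          · rw [abs_of_nonneg hx, mul_comm]
          · rw [abs_of_neg (not_le.1 hx)]; ring
      _ = ∑ j : Fin n, sortedAbs x ((j : ℕ) + 1) * w j := by
          rw [← Equiv.sum_comp σ]
          simp [sortedAbs_succ, σ]

theorem inner_sub_norm_sq_eq_sum (x y : Evec n) :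
    ⟪x, y⟫ - ‖x‖ ^ 2 = ∑ i, (x i * y i - x i ^ 2) := by
  simp [PiLp.inner_apply, EuclideanSpace.norm_sq_eq, sum_sub_distrib, mul_comm]

theorem inner_sub_norm_sq_le_sum_map {x y : Evec n} {z : Fin n → ℝ} {π : Equiv.Perm (Fin n)}
    (hy : ∀ i, |y i| = 2 * z (π i)) :
    ⟪x, y⟫ - ‖x‖ ^ 2 ≤ ∑ j ∈ (univ.filter fun i => x i ≠ 0).map π.toEmbedding, z j ^ 2 := by
  classical
  rw [inner_sub_norm_sq_eq_sum, sum_map, ← Fintype.sum_ite_mem (univ.filter fun i => x i ≠ 0)]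
  refine sum_le_sum fun i _ => ?_
  split_ifs with hi
  · have hsq : y i ^ 2 = 4 * z (π i) ^ 2 := by rw [← sq_abs, hy]; ring
    rw [Equiv.coe_toEmbedding]
    nlinarith [sq_nonneg (x i - y i / 2)]
  · simp only [mem_filter, mem_univ, true_and, not_not] at hi
    simp [hi]

theorem inner_sub_norm_sq_eq_sum_of_eq_half {x y : Evec n} {z : Fin n → ℝ}
    {π : Equiv.Perm (Fin n)} (hy : ∀ i, |y i| = 2 * z (π i)) {T : Finset (Fin n)}
    (hx : ∀ i, x i = if π i ∈ T then y i / 2 else 0) :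
    ⟪x, y⟫ - ‖x‖ ^ 2 = ∑ j ∈ T, z j ^ 2 := by
  classical
  calc ⟪x, y⟫ - ‖x‖ ^ 2 = ∑ i, if π i ∈ T then z (π i) ^ 2 else 0 := by
        rw [inner_sub_norm_sq_eq_sum]
        refine sum_congr rfl fun i _ => ?_
        rw [hx]
        split_ifs
        · linear_combination (by rw [← sq_abs, hy]; ring : y i ^ 2 = 4 * z (π i) ^ 2) / 4
        · ring
    _ = ∑ j ∈ T, z j ^ 2 :=
        (Equiv.sum_comp π fun j => if j ∈ T then z j ^ 2 else 0).trans (Fintype.sum_ite_mem T _)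

def posExcess (a : ℝ≥0∞) (t : ℝ) : ℝ := if a = ⊤ then 0 else max (t ^ 2 - a.toReal) 0

theorem posExcess_nonneg (a : ℝ≥0∞) (t : ℝ) : 0 ≤ posExcess a t := by
  unfold posExcess; split_ifs <;> simp

theorem sub_le_posExcess {a : ℝ≥0∞} (ha : a ≠ ⊤) (t : ℝ) : t ^ 2 - a.toReal ≤ posExcess a t := by
  simp [posExcess, ha]

theorem posExcess_eq_ite (a : ℝ≥0∞) (t : ℝ) :
    posExcess a t = if a ≠ ⊤ ∧ a.toReal < t ^ 2 then t ^ 2 - a.toReal else 0 := by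
  unfold posExcess
  by_cases ha : a = ⊤
  · simp [ha]
  · by_cases ht : a.toReal < t ^ 2
    · simp [ha, ht, ht.le]
    · simp [ha, ht, not_lt.1 ht]

def fconjSorted (g : ℕ → ℝ≥0∞) (z : Fin n → ℝ) : ℝ :=
  ∑ i : Fin n, posExcess (g ((i : ℕ) + 1)) (z i)

theorem fconjSorted_le_fconj {g : ℕ → ℝ≥0∞} (hg : Monotone g) {y : Evec n} {z : Fin n → ℝ}
    {π : Equiv.Perm (Fin n)} (hy : ∀ i, |y i| = 2 * z (π i)) :
    (fconjSorted g z : EReal) ≤ fconj g y := by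
  classical
  set T := univ.filter fun j : Fin n => g ((j : ℕ) + 1) ≠ ⊤ ∧ (g ((j : ℕ) + 1)).toReal < z j ^ 2
  set x : Evec n := WithLp.toLp 2 fun i => if π i ∈ T then y i / 2 else 0
  have hfin : ∀ j ∈ T, g ((j : ℕ) + 1) ≠ ⊤ := fun j hj => (mem_filter.1 hj).2.1
  have hcard : spcard x ≤ #T := by
    refine (card_le_card (t := T.map π.symm.toEmbedding) fun i hi => ?_).trans (card_map _).le
    rw [mem_map_equiv, Equiv.symm_symm]
    by_contra hiT
    exact (mem_filter.1 hi).2 (by simp [x, hiT])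
  have hfobj : fobj g x ≤ ((∑ j ∈ T, (g ((j : ℕ) + 1)).toReal + ‖x‖ ^ 2 : ℝ) : EReal) := by
    rw [fobj, EReal.coe_add, ← ENNReal.toReal_sum hfin,
      EReal.coe_ennreal_toReal (ENNReal.sum_ne_top.2 hfin)]
    gcongr
    exact EReal.coe_ennreal_le_coe_ennreal_iff.2 (Gsum_le_sum_of_le_card hg hcard)
  have hsorted : fconjSorted g z = ∑ j ∈ T, (z j ^ 2 - (g ((j : ℕ) + 1)).toReal) := by
    simp only [fconjSorted, posExcess_eq_ite, ← sum_filter]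
    rfl
  calc (fconjSorted g z : EReal)
      = ((⟪x, y⟫ - (∑ j ∈ T, (g ((j : ℕ) + 1)).toReal + ‖x‖ ^ 2) : ℝ) : EReal) := by
        rw [hsorted, sum_sub_distrib,
          ← inner_sub_norm_sq_eq_sum_of_eq_half (x := x) hy fun i => rfl]
        ring_nf
    _ ≤ ⟪x, y⟫ - fobj g x := by rw [EReal.coe_sub]; exact EReal.sub_le_sub le_rfl hfobj
    _ ≤ fconj g y := le_iSup (fun x : Evec n => ((⟪x, y⟫ : ℝ) : EReal) - fobj g x) x

theorem fconj_le_fconjSorted (g : ℕ → ℝ≥0∞) {y : Evec n} {z : Fin n → ℝ} (hz : Antitone z)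
    {π : Equiv.Perm (Fin n)} (hy : ∀ i, |y i| = 2 * z (π i)) :
    fconj g y ≤ (fconjSorted g z : EReal) := by
  classical
  have hz0 : ∀ j, 0 ≤ z j := fun j => by
    have := hy (π.symm j)
    rw [π.apply_symm_apply] at this
    linarith [abs_nonneg (y (π.symm j))]
  have hz2 : Antitone fun j => z j ^ 2 := fun i j hij => pow_le_pow_left₀ (hz0 j) (hz hij) 2
  refine iSup_le fun x => ?_
  set S := univ.filter fun i => x i ≠ 0
  set P := univ.filter fun j : Fin n => j.val < #S
  have hS : spcard x = #S := rfl
  have hSn : #S ≤ n := card_le_univ S |>.trans_eq (Fintype.card_fin n)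
  by_cases hG : Gsum g #S = ⊤
  · rw [fobj, hS, hG, EReal.coe_ennreal_top, EReal.top_add_coe, EReal.sub_top]
    exact bot_le
  have hfin : ∀ j ∈ P, g ((j : ℕ) + 1) ≠ ⊤ :=
    ENNReal.sum_ne_top.1 (Gsum_eq_sum_filter_val_lt g hSn ▸ hG)
  have htop : ∑ j ∈ S.map π.toEmbedding, z j ^ 2 ≤ ∑ j ∈ P, z j ^ 2 := by
    simpa only [card_map] using Fin.sum_le_sum_filter_val_lt_card hz2 (S.map π.toEmbedding)
  rw [fobj, hS, ← EReal.coe_ennreal_toReal hG, ← EReal.coe_add, ← EReal.coe_sub,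
    EReal.coe_le_coe_iff, Gsum_eq_sum_filter_val_lt g hSn, ENNReal.toReal_sum hfin]
  calc ⟪x, y⟫ - (∑ j ∈ P, (g ((j : ℕ) + 1)).toReal + ‖x‖ ^ 2)
      ≤ ∑ j ∈ P, (z j ^ 2 - (g ((j : ℕ) + 1)).toReal) := by
        rw [sum_sub_distrib]
        linarith [inner_sub_norm_sq_le_sum_map (x := x) hy]
    _ ≤ ∑ j ∈ P, posExcess (g ((j : ℕ) + 1)) (z j) :=
        sum_le_sum fun j hj => sub_le_posExcess (hfin j hj) _
    _ ≤ fconjSorted g z := sum_le_univ_sum_of_nonneg fun j => posExcess_nonneg _ _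

theorem fconj_eq_fconjSorted {g : ℕ → ℝ≥0∞} (hg : Monotone g) {y : Evec n} {z : Fin n → ℝ}
    (hz : Antitone z) {π : Equiv.Perm (Fin n)} (hy : ∀ i, |y i| = 2 * z (π i)) :
    fconj g y = fconjSorted g z :=
  (fconj_le_fconjSorted g hz hy).antisymm (fconjSorted_le_fconj hg hy)

end

theorem biconjugate_sup_representation_general
    {n : ℕ} (g : ℕ → ℝ≥0∞) (hgmono : Monotone g) (x : Evec n) :
    fbiconj g x =
      ⨆ z ∈ {z : Fin n → ℝ | (∀ i j : Fin n, i ≤ j → z j ≤ z i) ∧ ∀ i, 0 ≤ z i},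
        (((2 * ∑ i : Fin n, sortedAbs x ((i : ℕ) + 1) * z i
          - ∑ i : Fin n, if g ((i : ℕ) + 1) = ⊤ then (0 : ℝ)
              else max ((z i) ^ 2 - (g ((i : ℕ) + 1)).toReal) 0) : ℝ) : EReal) := by
  apply le_antisymm
  · refine iSup_le fun y => ?_
    set σ := Tuple.sort fun i => -|y i|
    set z : Fin n → ℝ := fun j => |y (σ j)| / 2
    have hy : ∀ i, |y i| = 2 * z (σ.symm i) := fun i => by
      simp only [z, Equiv.apply_symm_apply]; ring
    have hz : Antitone z := fun i j hij => by
      simpa only [z] using div_le_div_of_nonneg_right (antitone_abs_comp_sort y hij) two_pos.le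
    have hxy : ⟪x, y⟫ ≤ 2 * ∑ j : Fin n, sortedAbs x ((j : ℕ) + 1) * z j := by
      rw [mul_sum]
      simpa only [mul_left_comm] using inner_le_sum_sortedAbs_mul x
        (fun i j hij => mul_le_mul_of_nonneg_left (hz hij) two_pos.le) hy
    rw [fconj_eq_fconjSorted hgmono hz hy, ← EReal.coe_sub]
    exact le_iSup₂_of_le z ⟨fun i j hij => hz hij, fun j => by positivity⟩
      (EReal.coe_le_coe_iff.2 (sub_le_sub_right hxy _))
  · refine iSup₂_le fun z ⟨hz, hz0⟩ => ?_
    obtain ⟨y, π, hy, hxy⟩ :=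
      exists_inner_eq_sum_sortedAbs_mul x (w := fun j => 2 * z j) fun j => by linarith [hz0 j]
    refine le_iSup_of_le y ?_
    rw [fconj_eq_fconjSorted hgmono (fun i j hij => hz i j hij) hy, ← EReal.coe_sub, hxy, mul_sum]
    simp only [mul_left_comm]
    exact le_rfl

/-- The biconjugate of `f(x) = G(card(x)) + ‖x‖²` satisfies
`f**(x) = sup { 2⟨x̃, z̃⟩ − Σ_i max(z̃_i² − g_i, 0) : z̃ nonincreasing, nonnegative }`,
where summands with `g_i = +∞` are interpreted as `0`. -/
theorem biconjugate_sup_representation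
    {n : ℕ} (g : ℕ → ℝ≥0∞) (hg0 : g 0 = 0) (hgmono : Monotone g) (x : Evec n) :
    fbiconj g x =
      ⨆ z ∈ {z : Fin n → ℝ | (∀ i j : Fin n, i ≤ j → z j ≤ z i) ∧ ∀ i, 0 ≤ z i},
        (((2 * ∑ i : Fin n, sortedAbs x ((i : ℕ) + 1) * z i
          - ∑ i : Fin n, if g ((i : ℕ) + 1) = ⊤ then (0 : ℝ)
              else max ((z i) ^ 2 - (g ((i : ℕ) + 1)).toReal) 0) : ℝ) : EReal) :=
  biconjugate_sup_representation_general g hgmono x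
end
end

section
/- Let μ > 0 and take g_i = μ for all i ∈ {1,…,n}, so that f(x) = μ·card(x) + ‖x‖². Then for every x ∈ ℝⁿ the biconjugate is given explicitly by f**(x) = Σ_{i=1}^n (μ − max(√μ − |x_i|, 0)²) + ‖x‖²; equivalently, the quadratic envelope is R_g(x) = Σ_{i=1}^n (μ − max(√μ − |x_i|, 0)²). -/
open scoped RealInnerProductSpace ENNReal
noncomputable section

/-! The penalty `f(x) = μ·card(x) + ‖x‖²` is separable: `f(x) = ∑ φ(xᵢ)` with
`φ(t) = μ·[t ≠ 0] + t²`. Conjugation commutes with separable sums, so it suffices to compute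
in one variable: `φ*(s) = max(s²/4 − μ, 0)`, attained at `t = s/2` or `t = 0`, and
`φ**(t) = μ − max(√μ − |t|, 0)² + t²`, attained at `s = 2t` when `|t| ≥ √μ` and at
`s = ±2√μ` otherwise. -/

open Set

section Separable

lemma EReal.iSup_coe_eq_of_isGreatest {α : Type*} {F : α → ℝ} {c : ℝ}
    (h : IsGreatest (range F) c) : ⨆ a, (F a : EReal) = c := by
  obtain ⟨⟨a, rfl⟩, hle⟩ := h
  exact le_antisymm (iSup_le fun b => EReal.coe_le_coe (hle ⟨b, rfl⟩)) (le_iSup_of_le a le_rfl)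

lemma EuclideanSpace.isGreatest_range_sum {ι : Type*} [Fintype ι] {h : ι → ℝ → ℝ}
    {c : ι → ℝ} (hc : ∀ i, IsGreatest (range (h i)) (c i)) :
    IsGreatest (range fun x : EuclideanSpace ℝ ι => ∑ i, h i (x i)) (∑ i, c i) := by
  choose t ht using fun i => (hc i).1
  refine ⟨⟨WithLp.toLp 2 t, Finset.sum_congr rfl fun i _ => ht i⟩, ?_⟩
  rintro _ ⟨x, rfl⟩
  exact Finset.sum_le_sum fun i _ => (hc i).2 ⟨x i, rfl⟩

lemma EuclideanSpace.real_inner_eq_sum {ι : Type*} [Fintype ι] (x y : EuclideanSpace ℝ ι) :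
    ⟪x, y⟫ = ∑ i, x i * y i := by
  simp [PiLp.inner_apply, mul_comm]

end Separable

section OneVariable

def cardSqPenalty (μ t : ℝ) : ℝ := (if t ≠ 0 then μ else 0) + t ^ 2

def cardSqPenaltyConj (μ s : ℝ) : ℝ := max (s ^ 2 / 4 - μ) 0

variable {μ : ℝ}

lemma isGreatest_cardSqPenaltyConj (hμ : 0 ≤ μ) (s : ℝ) :
    IsGreatest (range fun t => t * s - cardSqPenalty μ t) (cardSqPenaltyConj μ s) := by
  unfold cardSqPenalty cardSqPenaltyConj
  refine ⟨?_, ?_⟩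
  · by_cases hs : μ < s ^ 2 / 4
    · have hs0 : s / 2 ≠ 0 := by rintro h; nlinarith [show s = 0 by linarith]
      exact ⟨s / 2, by dsimp only; rw [if_pos hs0, max_eq_left (by linarith)]; ring⟩
    · exact ⟨0, by simp [max_eq_right (sub_nonpos.mpr (not_lt.mp hs))]⟩
  · rintro _ ⟨t, rfl⟩
    dsimp only
    split_ifs
    · nlinarith [sq_nonneg (t - s / 2), le_max_left (s ^ 2 / 4 - μ) 0]
    · simp_all

lemma isGreatest_cardSqPenaltyBiconj (hμ : 0 ≤ μ) (t : ℝ) :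
    IsGreatest (range fun s => t * s - cardSqPenaltyConj μ s)
      (μ - max (√μ - |t|) 0 ^ 2 + t ^ 2) := by
  unfold cardSqPenaltyConj
  have hsq := Real.sq_sqrt hμ
  have hsqrt := Real.sqrt_nonneg μ
  refine ⟨?_, ?_⟩
  · by_cases ht : √μ ≤ |t|
    · refine ⟨2 * t, ?_⟩
      have : μ ≤ t ^ 2 := by nlinarith [sq_abs t]
      dsimp only
      rw [max_eq_left (by linarith : (0 : ℝ) ≤ (2 * t) ^ 2 / 4 - μ),
        max_eq_right (sub_nonpos.mpr ht)]
      ring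
    · rw [max_eq_left (sub_nonneg.mpr (not_le.mp ht).le)]
      rcases le_or_gt 0 t with h | h
      · refine ⟨2 * √μ, ?_⟩
        have : (2 * √μ) ^ 2 / 4 - μ = 0 := by linarith
        dsimp only
        rw [this, max_self, abs_of_nonneg h]
        ring_nf; linarith
      · refine ⟨-(2 * √μ), ?_⟩
        have : (-(2 * √μ)) ^ 2 / 4 - μ = 0 := by linarith
        dsimp only
        rw [this, max_self, abs_of_neg h]
        ring_nf; linarith
  · rintro _ ⟨s, rfl⟩
    dsimp only
    have hts : t * s ≤ |t| * |s| := (le_abs_self _).trans (abs_mul t s).le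
    rw [← sq_abs s, ← sq_abs t]
    rcases le_total √μ |t| with ht | ht
    · rw [max_eq_right (sub_nonpos.mpr ht)]
      nlinarith [sq_nonneg (|t| - |s| / 2), le_max_left (|s| ^ 2 / 4 - μ) 0]
    · rw [max_eq_left (sub_nonneg.mpr ht : 0 ≤ √μ - |t|)]
      rcases le_total (|s| ^ 2 / 4 - μ) 0 with hc | hc
      · rw [max_eq_right hc]
        have : |s| ≤ 2 * √μ := by nlinarith [abs_nonneg s]
        nlinarith [abs_nonneg t]
      · rw [max_eq_left hc]
        have : 2 * √μ ≤ |s| := by nlinarith [abs_nonneg s]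
        nlinarith [mul_nonneg (sub_nonneg.mpr this)
          (show 0 ≤ |s| / 2 + √μ - 2 * |t| by linarith)]

end OneVariable

section ConstantWeights

abbrev constWeights (μ : ℝ) : ℕ → ℝ≥0∞ :=
  fun i => if i = 0 then 0 else ENNReal.ofReal μ

variable {n : ℕ} {μ : ℝ}

lemma coe_gsum_constWeights (hμ : 0 ≤ μ) (k : ℕ) :
    (Gsum (constWeights μ) k : EReal) = ((k * μ : ℝ) : EReal) := by
  have hsum : Gsum (constWeights μ) k = ENNReal.ofReal (k * μ) := by
    rw [Gsum, Finset.sum_congr rfl fun i hi =>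
        if_neg (Nat.one_le_iff_ne_zero.mp (Finset.mem_Icc.mp hi).1), Finset.sum_const,
      Nat.card_Icc, add_tsub_cancel_right, nsmul_eq_mul,
      ENNReal.ofReal_mul (Nat.cast_nonneg k), ENNReal.ofReal_natCast]
  rw [hsum, EReal.coe_ennreal_ofReal, max_eq_left (by positivity)]

lemma fobj_constWeights (hμ : 0 ≤ μ) (x : Evec n) :
    fobj (constWeights μ) x = ((∑ i, cardSqPenalty μ (x i) : ℝ) : EReal) := by
  have hcard : ∑ i, (if x i ≠ 0 then μ else 0) = spcard x * μ := by
    rw [← Finset.sum_filter, Finset.sum_const, nsmul_eq_mul, spcard]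
  rw [fobj, coe_gsum_constWeights hμ, ← EReal.coe_add, EuclideanSpace.real_norm_sq_eq,
    ← hcard, ← Finset.sum_add_distrib]
  rfl

lemma fconj_constWeights (hμ : 0 ≤ μ) (y : Evec n) :
    fconj (constWeights μ) y = ((∑ i, cardSqPenaltyConj μ (y i) : ℝ) : EReal) := by
  simp_rw [fconj, fobj_constWeights hμ, ← EReal.coe_sub, EuclideanSpace.real_inner_eq_sum,
    ← Finset.sum_sub_distrib]
  exact EReal.iSup_coe_eq_of_isGreatest
    (EuclideanSpace.isGreatest_range_sum fun i => isGreatest_cardSqPenaltyConj hμ (y i))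

lemma fbiconj_constWeights (hμ : 0 ≤ μ) (x : Evec n) :
    fbiconj (constWeights μ) x
      = ((∑ i, (μ - max (√μ - |x i|) 0 ^ 2 + x i ^ 2) : ℝ) : EReal) := by
  simp_rw [fbiconj, fconj_constWeights hμ, ← EReal.coe_sub, EuclideanSpace.real_inner_eq_sum,
    ← Finset.sum_sub_distrib]
  exact EReal.iSup_coe_eq_of_isGreatest
    (EuclideanSpace.isGreatest_range_sum fun i => isGreatest_cardSqPenaltyBiconj hμ (x i))

end ConstantWeights

/-- For the constant sequence `g_i = μ > 0` (so that
`f(x) = μ·card(x) + ‖x‖²`), the biconjugate is given explicitly by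
`f**(x) = Σ_i (μ − max(√μ − |x_i|, 0)²) + ‖x‖²`, and the quadratic envelope is
`R_g(x) = Σ_i (μ − max(√μ − |x_i|, 0)²)`. -/
theorem constant_g_envelope_formula
    {n : ℕ} (μ : ℝ) (hμ : 0 < μ) (x : Evec n) :
    fbiconj (fun i => if i = 0 then 0 else ENNReal.ofReal μ) x
      = ((((∑ i : Fin n, (μ - max (Real.sqrt μ - |x i|) 0 ^ 2)) + ‖x‖ ^ 2 : ℝ)) : EReal) ∧
    fbiconj (fun i => if i = 0 then 0 else ENNReal.ofReal μ) x - ((‖x‖ ^ 2 : ℝ) : EReal)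
      = (((∑ i : Fin n, (μ - max (Real.sqrt μ - |x i|) 0 ^ 2) : ℝ)) : EReal) := by
  have h := fbiconj_constWeights hμ.le x
  rw [Finset.sum_add_distrib, ← EuclideanSpace.real_norm_sq_eq] at h
  rw [h, ← EReal.coe_sub, add_sub_cancel_right]
  exact ⟨rfl, rfl⟩
end
end
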